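/- For a, ω ∈ ℝ, ω ≠ 0, the bicomplex Laplace transform of f(t) = e^{-at}sin(ωt) equals ω((ξ+a)² + ω²)⁻¹ for all ξ = ξ₁e₁ + ξ₂e₂ with Re(ξ₁) > -a, Re(ξ₂) > -a. -/

import Mathlib

open MeasureTheory Set

noncomputable section

/-- Bicomplex numbers, modeled in idempotent coordinates as pairs `(ξ₁, ξ₂)` of
complex numbers (multiplication on `ℂ × ℂ` is componentwise, which is exactly
bicomplex multiplication in idempotent coordinates). -/
abbrev C2 := ℂ × ℂ

namespace C2

/-- The imaginary unit `i₁` of the bicomplex numbers. -/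
def i1 : C2 := (Complex.I, Complex.I)

/-- The imaginary unit `i₂` of the bicomplex numbers. -/
def i2 : C2 := (-Complex.I, Complex.I)

/-- The idempotent `e₁ = (1 + i₁i₂)/2`. -/
def e1 : C2 := (1 + i1 * i2) / 2

/-- The idempotent `e₂ = (1 - i₁i₂)/2`. -/
def e2 : C2 := (1 - i1 * i2) / 2

/-- Embedding of `ℂ` (the `i₁`-copy of the complex numbers) into `C2`. -/
def oc (z : ℂ) : C2 := (z, z)

/-- The bicomplex number `z₁ + i₂ z₂`. -/
def bmk (z₁ z₂ : ℂ) : C2 := oc z₁ + oc z₂ * i2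

/-- First idempotent projection. -/
def P1 (ξ : C2) : ℂ := ξ.1

/-- Second idempotent projection. -/
def P2 (ξ : C2) : ℂ := ξ.2

/-- First cartesian component: `z₁` in `ξ = z₁ + i₂ z₂`. -/
def z1 (ξ : C2) : ℂ := (ξ.1 + ξ.2) / 2

/-- Second cartesian component: `z₂` in `ξ = z₁ + i₂ z₂`. -/
def z2 (ξ : C2) : ℂ := Complex.I * (ξ.1 - ξ.2) / 2

/-- The bicomplex (Euclidean) norm `‖z₁ + i₂ z₂‖ = √(|z₁|² + |z₂|²)`. -/
def bnorm (ξ : C2) : ℝ := Real.sqrt (‖z1 ξ‖ ^ 2 + ‖z2 ξ‖ ^ 2)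

/-- The bicomplex exponential (computed via idempotent components). -/
def bexp (ξ : C2) : C2 := (Complex.exp ξ.1, Complex.exp ξ.2)

/-- The bicomplex Laplace transform `F(ξ) = ∫₀^∞ f(t) e^{-ξt} dt`. -/
def laplace (f : ℝ → ℝ) (ξ : C2) : C2 := ∫ t in Set.Ici (0 : ℝ), f t • bexp (-(t • ξ))

end C2

open C2

/-! In idempotent coordinates the bicomplex transform splits into two complex Laplace transforms.
Writing `sin (ω t) = (e^{iωt} - e^{-iωt}) / 2i` and using `∫₀^∞ e^{ct} dt = -1/c` for `Re c < 0`,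
each of them equals `(1/c₋ - 1/c₊) / 2i` with `c± = ±iω - (s + a)`, and `c₊ c₋ = (s + a)² + ω²`. -/

def complexLaplace (f : ℝ → ℝ) (s : ℂ) : ℂ := ∫ t in Ioi 0, f t • Complex.exp (-(t • s))

theorem laplace_mk {f : ℝ → ℝ} {s₁ s₂ : ℂ}
    (h₁ : IntegrableOn (fun t => f t • Complex.exp (-(t • s₁))) (Ioi 0))
    (h₂ : IntegrableOn (fun t => f t • Complex.exp (-(t • s₂))) (Ioi 0)) :
    laplace f (s₁, s₂) = (complexLaplace f s₁, complexLaplace f s₂) := by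
  rw [laplace, integral_Ici_eq_integral_Ioi]
  exact integral_pair h₁ h₂

theorem oc_mul_e1_add_oc_mul_e2 (z₁ z₂ : ℂ) : oc z₁ * e1 + oc z₂ * e2 = (z₁, z₂) := by
  simp [oc, e1, e2, i1, i2, Prod.ext_iff]

section ExpMulSin

open Complex

theorem exp_mul_sin_smul_cexp (a ω : ℝ) (s : ℂ) (t : ℝ) :
    (Real.exp (-a * t) * Real.sin (ω * t)) • exp (-(t • s)) =
      (exp ((ω * I - (s + a)) * t) - exp ((-ω * I - (s + a)) * t)) / (2 * I) := by
  have hsplit : ∀ c : ℂ,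
      exp ((c * I - (s + a)) * t) = exp (-a * t) * exp (-(t • s)) * exp (c * t * I) := by
    intro c
    rw [← exp_add, ← exp_add, real_smul]
    ring_nf
  simp only [hsplit, real_smul, ofReal_mul, ofReal_exp, ofReal_sin, sin, ofReal_neg]
  field_simp
  ring_nf
  rw [I_sq]
  ring

variable {a : ℝ} (ω : ℝ) {s : ℂ}

theorem re_mul_I_sub_add_neg (hs : -a < s.re) :
    (ω * I - (s + a)).re < 0 ∧ (-ω * I - (s + a)).re < 0 := by
  constructor <;> simp <;> linarith

theorem integrableOn_exp_mul_sin_smul_cexp (hs : -a < s.re) :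
    IntegrableOn (fun t : ℝ => (Real.exp (-a * t) * Real.sin (ω * t)) • exp (-(t • s)))
      (Ioi 0) := by
  obtain ⟨hplus, hminus⟩ := re_mul_I_sub_add_neg ω hs
  simp only [exp_mul_sin_smul_cexp]
  exact ((integrableOn_exp_mul_complex_Ioi hplus 0).sub
    (integrableOn_exp_mul_complex_Ioi hminus 0)).div_const _

theorem complexLaplace_exp_mul_sin (hs : -a < s.re) :
    complexLaplace (fun t => Real.exp (-a * t) * Real.sin (ω * t)) s =
      ω * ((s + a) ^ 2 + ω ^ 2)⁻¹ := by
  obtain ⟨hplus, hminus⟩ := re_mul_I_sub_add_neg ω hs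
  simp only [complexLaplace, exp_mul_sin_smul_cexp]
  rw [integral_div, integral_sub (integrableOn_exp_mul_complex_Ioi hplus 0)
    (integrableOn_exp_mul_complex_Ioi hminus 0), integral_exp_mul_complex_Ioi hplus,
    integral_exp_mul_complex_Ioi hminus]
  have hfactor : (s + a) ^ 2 + ω ^ 2 = (ω * I - (s + a)) * (-ω * I - (s + a)) := by
    linear_combination (ω : ℂ) ^ 2 * I_sq
  have hne_plus : ω * I - (s + a) ≠ 0 := fun h => hplus.ne (by rw [h, zero_re])
  have hne_minus : -(ω * I) - (s + a) ≠ 0 := by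
    rw [← neg_mul]
    exact fun h => hminus.ne (by rw [h, zero_re])
  rw [hfactor, ofReal_zero, mul_zero, mul_zero, exp_zero]
  field_simp
  ring

end ExpMulSin

theorem stmt17_general (a ω : ℝ) (ξ₁ ξ₂ : ℂ) (h1 : -a < ξ₁.re) (h2 : -a < ξ₂.re) :
    laplace (fun t => Real.exp (-a * t) * Real.sin (ω * t)) (oc ξ₁ * e1 + oc ξ₂ * e2) =
      oc (ω : ℂ) * ((oc ξ₁ * e1 + oc ξ₂ * e2 + oc (a : ℂ)) ^ 2 + oc (ω : ℂ) ^ 2)⁻¹ := by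
  rw [oc_mul_e1_add_oc_mul_e2,
    laplace_mk (integrableOn_exp_mul_sin_smul_cexp ω h1) (integrableOn_exp_mul_sin_smul_cexp ω h2),
    complexLaplace_exp_mul_sin ω h1, complexLaplace_exp_mul_sin ω h2]
  rfl

theorem stmt17 (a ω : ℝ) (hω : ω ≠ 0) (ξ₁ ξ₂ : ℂ) (h1 : -a < ξ₁.re) (h2 : -a < ξ₂.re) :
    laplace (fun t => Real.exp (-a * t) * Real.sin (ω * t)) (oc ξ₁ * e1 + oc ξ₂ * e2) =
      oc (ω : ℂ) * ((oc ξ₁ * e1 + oc ξ₂ * e2 + oc (a : ℂ)) ^ 2 + oc (ω : ℂ) ^ 2)⁻¹ :=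
  stmt17_general a ω ξ₁ ξ₂ h1 h2
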